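/- Let C be a nonempty (n,d,w) constant-weight code with d even and d < 2w ≤ n, with distance distribution {A_{2i}}, and let H = {d/2, …, w}. Suppose H1 ⊆ H satisfies: (a) |H1| ≥ 2; (b) there exist i ≠ j in H1 with m_{i,j} = d; (c) for all k ≠ l in H1 with {k,l} ≠ {i,j}, m_{k,l} < d. Let H2 = H1 \ {i,j}. For each k ∈ H1 let P_k be a positive integer with P_k ≥ T(k,w,k,n−w,d), and let P_{ij}, P_{ji} be positive integers with P_{ji} ≥ T(w1,n1,w2,n2,d) and P_{ij} ≥ T(w1',n1',w2',n2',d), where w1 = |i+j−w|, n1 = i if w < i+j and n1 = w−i otherwise, w2 = |i+j−(n−w)|, n2 = i if n−w < i+j and n2 = (n−w)−i otherwise, and w1', n1', w2', n2' are defined the same way with the roles of i and j interchanged. Then: (1) if P_{ij}/P_i + P_{ji}/P_j ≥ 1, then ((P_j − P_{ji})/(P_j·P_{ij}))·A_{2i} + (1/P_j)·A_{2j} + Σ_{k∈H2} A_{2k}/P_k ≤ 1; (2) if P_{ij}/P_i + P_{ji}/P_j ≥ 1, then (1/P_i)·A_{2i} + ((P_i − P_{ij})/(P_i·P_{ji}))·A_{2j}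 + Σ_{k∈H2} A_{2k}/P_k ≤ 1; (3) if P_{ij}/P_i + P_{ji}/P_j ≤ 1, then Σ_{k∈H1} A_{2k}/P_k ≤ 1. -/

import Mathlib

/-- The number of ones of a binary vector. -/
def wtOnes {n : ℕ} (u : Fin n → ZMod 2) : ℕ :=
  (Finset.univ.filter (fun t => u t = 1)).card

/-- `C` is an `(n,d,w)` constant-weight binary code. -/
def IsCWCode (n d w : ℕ) (C : Finset (Fin n → ZMod 2)) : Prop :=
  (∀ c ∈ C, wtOnes c = w) ∧
  ∀ u ∈ C, ∀ v ∈ C, u ≠ v → d ≤ hammingDist u v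

/-- `A n d w`: the largest possible size of an `(n,d,w)` constant-weight code. -/
noncomputable def A (n d w : ℕ) : ℕ :=
  sSup {M | ∃ C : Finset (Fin n → ZMod 2), IsCWCode n d w C ∧ C.card = M}

/-- `C` is a `(w1,n1,w2,n2,d)` doubly-constant-weight binary code. -/
def IsDCWCode (w1 n1 w2 n2 d : ℕ) (C : Finset (Fin n1 ⊕ Fin n2 → ZMod 2)) : Prop :=
  (∀ c ∈ C,
    (Finset.univ.filter (fun t : Fin n1 => c (Sum.inl t) = 1)).card = w1 ∧
    (Finset.univ.filter (fun t : Fin n2 => c (Sum.inr t) = 1)).card = w2) ∧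
  ∀ u ∈ C, ∀ v ∈ C, u ≠ v → d ≤ hammingDist u v

/-- `T w1 n1 w2 n2 d`: the largest possible size of a `(w1,n1,w2,n2,d)`
doubly-constant-weight code. -/
noncomputable def T (w1 n1 w2 n2 d : ℕ) : ℕ :=
  sSup {M | ∃ C : Finset (Fin n1 ⊕ Fin n2 → ZMod 2), IsDCWCode w1 n1 w2 n2 d C ∧ C.card = M}

/-- `S_i(c)`: the set of codewords of `C` at distance `i` from `c`. -/
def Sdist {n : ℕ} (C : Finset (Fin n → ZMod 2)) (c : Fin n → ZMod 2) (i : ℕ) :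
    Finset (Fin n → ZMod 2) :=
  C.filter (fun u => hammingDist u c = i)

/-- The distance distribution `A_i = (1/|C|) ∑_{c ∈ C} |S_i(c)|` of a code `C`. -/
noncomputable def distDistr {n : ℕ} (C : Finset (Fin n → ZMod 2)) (i : ℕ) : ℚ :=
  (∑ c ∈ C, ((Sdist C c i).card : ℚ)) / (C.card : ℚ)

/-- `V_i`: vectors of `F^n` with exactly `i` ones on the first `w` coordinates and
exactly `i` ones on the last `n - w` coordinates. -/
def Vset (n w i : ℕ) : Finset (Fin n → ZMod 2) :=
  Finset.univ.filter (fun u =>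
    (Finset.univ.filter (fun t : Fin n => t.val < w ∧ u t = 1)).card = i ∧
    (Finset.univ.filter (fun t : Fin n => w ≤ t.val ∧ u t = 1)).card = i)

/-- `m_{i,j} = max { d(u,v) : u ∈ V_i, v ∈ V_j }`. -/
def mMax (n w i j : ℕ) : ℕ :=
  ((Vset n w i) ×ˢ (Vset n w j)).sup fun p => hammingDist p.1 p.2

/-- `P⁻_k(n;x) = ∑_{j odd} C(x,j) C(n-x,k-j)`. -/
def Pminus (k n x : ℕ) : ℕ :=
  ∑ j ∈ Finset.range (k + 1), if Odd j then x.choose j * (n - x).choose (k - j) else 0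

/-- `P⁺_k(n;x) = ∑_{j even} C(x,j) C(n-x,k-j)`. -/
def Pplus (k n x : ℕ) : ℕ :=
  ∑ j ∈ Finset.range (k + 1), if Even j then x.choose j * (n - x).choose (k - j) else 0

/-- The Krawtchouk polynomial `P_k(n;x) = ∑_j (-1)^j C(x,j) C(n-x,k-j)` at integer points. -/
def Kraw (k n x : ℕ) : ℤ :=
  ∑ j ∈ Finset.range (k + 1), (-1 : ℤ) ^ j * x.choose j * (n - x).choose (k - j)

/-!
Fix a codeword `c`. For `x ∈ S_{2k}(c)` the vector `x + c` has `k` ones on the support of `c`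
and `k` ones off it, so `S_{2k}(c) + c` is a doubly-constant-weight code and
`|S_{2k}(c)| ≤ T(k, w, k, n - w, d)`. Two such vectors for `k ≠ l` are at distance at most
`m_{k,l}`, the distance reached exactly when their supports overlap as little as possible in
both blocks. Hence for `k ≠ l` in `H1` other than the pair `{i, j}` one of `S_{2k}(c)`,
`S_{2l}(c)` is empty, and if `S_{2j}(c)` contains some `v`, every `x ∈ S_{2i}(c)` overlaps `v`
minimally: then `x` is fixed off a set of `n1 + n2` coordinates on which the codewords form a
`(w1, n1, w2, n2, d)` code, so `|S_{2i}(c)| ≤ T(w1, n1, w2, n2, d)`. These constraints give each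
inequality for the counts `|S_{2k}(c)|` of a single codeword, and averaging over `c` gives it for
the `A_{2k}`.
-/

open Finset

section BinaryVectors

variable {ι : Type*}

def wtOn (s : Finset ι) (x : ι → ZMod 2) : ℕ := #{t ∈ s | x t = 1}

lemma wtOn_congr {s : Finset ι} {x y : ι → ZMod 2} (h : ∀ t ∈ s, x t = y t) :
    wtOn s x = wtOn s y :=
  congrArg card (filter_congr fun t ht => by rw [h t ht])

lemma wtOn_eq_zero_iff {s : Finset ι} {x : ι → ZMod 2} : wtOn s x = 0 ↔ ∀ t ∈ s, x t ≠ 1 := by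
  rw [wtOn, card_eq_zero, filter_eq_empty_iff]

lemma wtOn_eq_sum_val (s : Finset ι) (x : ι → ZMod 2) : wtOn s x = ∑ t ∈ s, (x t).val := by
  rw [wtOn, card_filter]
  refine sum_congr rfl fun t _ => ?_
  generalize x t = a
  revert a; decide

lemma mul_eq_one_iff_zmod_two (a b : ZMod 2) : a * b = 1 ↔ a = 1 ∧ b = 1 := by
  revert a b; decide

lemma wtOn_filter_eq_one (s : Finset ι) (x y : ι → ZMod 2) :
    wtOn {t ∈ s | y t = 1} x = wtOn s (x * y) := by
  rw [wtOn, wtOn, filter_filter]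
  exact congrArg card
    (filter_congr fun t _ => by rw [Pi.mul_apply, mul_eq_one_iff_zmod_two, and_comm])

lemma wtOn_add_add_two_mul_wtOn_mul (s : Finset ι) (x y : ι → ZMod 2) :
    wtOn s (x + y) + 2 * wtOn s (x * y) = wtOn s x + wtOn s y := by
  simp only [wtOn_eq_sum_val, mul_sum, ← sum_add_distrib]
  refine sum_congr rfl fun t _ => ?_
  simp only [Pi.add_apply, Pi.mul_apply]
  generalize x t = a; generalize y t = b
  revert a b; decide

lemma wtOn_add_one_add_wtOn (s : Finset ι) (x : ι → ZMod 2) :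
    wtOn s (x + 1) + wtOn s x = #s := by
  simp only [wtOn_eq_sum_val, card_eq_sum_ones, ← sum_add_distrib]
  refine sum_congr rfl fun t _ => ?_
  simp only [Pi.add_apply, Pi.one_apply]
  generalize x t = a
  revert a; decide

lemma wtOn_add_one_mul_add_one (s : Finset ι) (x y : ι → ZMod 2) :
    wtOn s ((x + 1) * (y + 1)) + wtOn s x + wtOn s y = #s + wtOn s (x * y) := by
  simp only [wtOn_eq_sum_val, card_eq_sum_ones, ← sum_add_distrib]
  refine sum_congr rfl fun t _ => ?_
  simp only [Pi.add_apply, Pi.mul_apply, Pi.one_apply]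
  generalize x t = a; generalize y t = b
  revert a b; decide

lemma wtOn_add_wtOn_le (s : Finset ι) (x y : ι → ZMod 2) :
    wtOn s x + wtOn s y ≤ wtOn s (x * y) + #s := by
  have := wtOn_add_one_mul_add_one s x y
  omega

lemma eq_one_of_wtOn_add_one_mul_add_one_eq_zero {s : Finset ι} {x y : ι → ZMod 2}
    (h : wtOn s ((x + 1) * (y + 1)) = 0) {t : ι} (ht : t ∈ s) (hy : y t ≠ 1) : x t = 1 := by
  have := wtOn_eq_zero_iff.1 h t ht
  simp only [Pi.mul_apply, Pi.add_apply, Pi.one_apply] at this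
  generalize x t = a at *; generalize y t = b at *
  revert a b; decide

lemma wtOn_add_eq_ite (s : Finset ι) {y β : ι → ZMod 2} {l : ℕ} (p : Prop) [Decidable p]
    (hy : wtOn s y = l) (hβ : ∀ t ∈ s, β t = if p then 0 else 1) :
    wtOn s (y + β) = if p then l else #s - l := by
  split_ifs at hβ ⊢
  · exact (wtOn_congr fun t ht => by simp [hβ t ht]).trans hy
  · rw [wtOn_congr (y := y + 1) fun t ht => by simp [hβ t ht]]
    have := wtOn_add_one_add_wtOn s y
    omega

/-- When `x` and `y` overlap as little as their weights allow on `s`, their supports cover `s`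
if `#s < l + k` and are disjoint otherwise; flipping both by `β = 1` turns the second case into
the first. So `x + β` is `1` wherever `y + β` is not, and is free only on the support of
`y + β`. -/
lemma wtOn_free_part (s : Finset ι) {x y β : ι → ZMod 2} {k l : ℕ}
    (hx : wtOn s x = k) (hy : wtOn s y = l) (hxy : wtOn s (x * y) = k + l - #s)
    (hβ : ∀ t ∈ s, β t = if #s < l + k then 0 else 1) :
    wtOn {t ∈ s | (y + β) t = 1} (x + β) = ((l : ℤ) + k - #s).natAbs ∧
    ∀ t ∈ s, (y + β) t ≠ 1 → (x + β) t = 1 := by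
  have hcompl := wtOn_add_one_mul_add_one s x y
  rw [wtOn_filter_eq_one]
  split_ifs at hβ with hlt
  · refine ⟨?_, fun t ht => eq_one_of_wtOn_add_one_mul_add_one_eq_zero ?_ ht⟩
    · rw [show wtOn s ((x + β) * (y + β)) = wtOn s (x * y) from
        wtOn_congr fun t ht => by simp [hβ t ht]]
      omega
    · rw [show wtOn s ((x + β + 1) * (y + β + 1)) = wtOn s ((x + 1) * (y + 1)) from
        wtOn_congr fun t ht => by simp [hβ t ht]]
      omega
  · refine ⟨?_, fun t ht => eq_one_of_wtOn_add_one_mul_add_one_eq_zero ?_ ht⟩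
    · rw [show wtOn s ((x + β) * (y + β)) = wtOn s ((x + 1) * (y + 1)) from
        wtOn_congr fun t ht => by simp [hβ t ht]]
      omega
    · rw [show wtOn s ((x + β + 1) * (y + β + 1)) = wtOn s (x * y) from
        wtOn_congr fun t ht => by simp [hβ t ht, CharTwo.add_cancel_right]]
      omega

lemma card_filter_equivFin_symm (A : Finset ι) (p : ι → Prop) [DecidablePred p] :
    #{a : Fin #A | p (A.equivFin.symm a)} = #{t ∈ A | p t} := by
  refine card_bij (fun a _ => (A.equivFin.symm a : ι)) (fun a ha => ?_) (fun a _ b _ h => ?_)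
    (fun t ht => ?_)
  · exact mem_filter.2 ⟨(A.equivFin.symm a).2, (mem_filter.1 ha).2⟩
  · exact A.equivFin.symm.injective (Subtype.ext h)
  · obtain ⟨htA, hpt⟩ := mem_filter.1 ht
    exact ⟨A.equivFin ⟨t, htA⟩, by simpa using hpt, by simp⟩

variable [Fintype ι]

def ones (c : ι → ZMod 2) : Finset ι := {t | c t = 1}

lemma hammingDist_add_add (x y g : ι → ZMod 2) : hammingDist (x + g) (y + g) = hammingDist x y :=
  hammingDist_comp (fun t a => a + g t) fun t => add_left_injective (g t)

lemma hammingDist_eq_wtOn_univ_add (x y : ι → ZMod 2) : hammingDist x y = wtOn univ (x + y) :=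
  congrArg card (filter_congr fun t _ => by
    simp only [Pi.add_apply]
    generalize x t = a; generalize y t = b
    revert a b; decide)

variable [DecidableEq ι]

lemma wtOn_add_wtOn_compl (s : Finset ι) (x : ι → ZMod 2) :
    wtOn s x + wtOn sᶜ x = wtOn univ x := by
  simp only [wtOn_eq_sum_val]
  exact sum_add_sum_compl s _

lemma hammingDist_eq_wtOn_add_wtOn_compl (s : Finset ι) (x y : ι → ZMod 2) :
    hammingDist x y = wtOn s (x + y) + wtOn sᶜ (x + y) := by
  rw [wtOn_add_wtOn_compl, hammingDist_eq_wtOn_univ_add]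

lemma hammingDist_add_two_mul_wtOn_mul (s : Finset ι) (x y : ι → ZMod 2) :
    hammingDist x y + 2 * wtOn s (x * y) + 2 * wtOn sᶜ (x * y) =
      wtOn s x + wtOn s y + (wtOn sᶜ x + wtOn sᶜ y) := by
  have := wtOn_add_add_two_mul_wtOn_mul s x y
  have := wtOn_add_add_two_mul_wtOn_mul sᶜ x y
  rw [hammingDist_eq_wtOn_add_wtOn_compl s]
  omega

lemma hammingDist_add_le_of_wtOn_eq (s : Finset ι) {x y : ι → ZMod 2} {k l : ℕ}
    (hx : wtOn s x = k) (hx' : wtOn sᶜ x = k) (hy : wtOn s y = l) (hy' : wtOn sᶜ y = l) :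
    hammingDist x y + 2 * (k + l - #s) + 2 * (k + l - #sᶜ) ≤ 2 * k + 2 * l := by
  have := hammingDist_add_two_mul_wtOn_mul s x y
  have := wtOn_add_wtOn_le s x y
  have := wtOn_add_wtOn_le sᶜ x y
  omega

lemma wtOn_mul_eq_of_le_hammingDist (s : Finset ι) {x y : ι → ZMod 2} {k l : ℕ}
    (hx : wtOn s x = k) (hx' : wtOn sᶜ x = k) (hy : wtOn s y = l) (hy' : wtOn sᶜ y = l)
    (h : 2 * k + 2 * l ≤ hammingDist x y + 2 * (k + l - #s) + 2 * (k + l - #sᶜ)) :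
    wtOn s (x * y) = k + l - #s ∧ wtOn sᶜ (x * y) = k + l - #sᶜ := by
  have := hammingDist_add_two_mul_wtOn_mul s x y
  have := wtOn_add_wtOn_le s x y
  have := wtOn_add_wtOn_le sᶜ x y
  omega

lemma wtOn_add_eq_of_hammingDist_eq {c x : ι → ZMod 2} {w k : ℕ} (hc : wtOn univ c = w)
    (hx : wtOn univ x = w) (hd : hammingDist x c = 2 * k) :
    wtOn (ones c) (x + c) = k ∧ wtOn (ones c)ᶜ (x + c) = k := by
  set s := ones c
  have hs : #s = w := hc
  have hxs : wtOn s (x + c) = wtOn s (x + 1) :=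
    wtOn_congr fun t ht => by simp [(mem_filter.1 ht).2]
  have hc0 : wtOn sᶜ c = 0 := wtOn_eq_zero_iff.2 fun t ht => by simpa [s, ones] using ht
  have hxc0 : wtOn sᶜ (x * c) = 0 := wtOn_eq_zero_iff.2 fun t ht h =>
    (by simpa [s, ones] using ht : c t ≠ 1) ((mul_eq_one_iff_zmod_two (x t) (c t)).1 h).2
  have := wtOn_add_add_two_mul_wtOn_mul sᶜ x c
  have := wtOn_add_one_add_wtOn s x
  have := wtOn_add_wtOn_compl s x
  have := hammingDist_eq_wtOn_add_wtOn_compl s x c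
  omega

end BinaryVectors

lemma card_le_T_of_isDCWCode {w₁ n₁ w₂ n₂ d : ℕ} {C : Finset (Fin n₁ ⊕ Fin n₂ → ZMod 2)}
    (hC : IsDCWCode w₁ n₁ w₂ n₂ d C) : #C ≤ T w₁ n₁ w₂ n₂ d :=
  le_csSup ⟨_, fun _ ⟨C', _, hM⟩ => hM ▸ card_le_univ C'⟩ ⟨C, hC, rfl⟩

lemma hammingDist_sum_elim {α β γ : Type*} [Fintype α] [Fintype β] [DecidableEq γ]
    (x₁ y₁ : α → γ) (x₂ y₂ : β → γ) :
    hammingDist (Sum.elim x₁ x₂) (Sum.elim y₁ y₂) = hammingDist x₁ y₁ + hammingDist x₂ y₂ := by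
  simp only [hammingDist, card_filter, Fintype.sum_sum_type, Sum.elim_inl, Sum.elim_inr]
  rfl

section Restrict

variable {ι : Type*} [Fintype ι] [DecidableEq ι]

noncomputable def restrictSum (A B : Finset ι) (x : ι → ZMod 2) : Fin #A ⊕ Fin #B → ZMod 2 :=
  Sum.elim (fun a => x (A.equivFin.symm a)) (fun b => x (B.equivFin.symm b))

lemma hammingDist_restrictSum {A B : Finset ι} (hAB : Disjoint A B) {x y : ι → ZMod 2}
    (h : ∀ t ∉ A ∪ B, x t = y t) :
    hammingDist (restrictSum A B x) (restrictSum A B y) = hammingDist x y := by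
  rw [restrictSum, restrictSum, hammingDist_sum_elim, hammingDist, hammingDist,
    card_filter_equivFin_symm A (fun t => x t ≠ y t),
    card_filter_equivFin_symm B (fun t => x t ≠ y t),
    ← card_union_of_disjoint (disjoint_filter_filter hAB), ← filter_union, hammingDist]
  refine congrArg card (ext fun t => ?_)
  simp only [mem_filter, mem_univ, true_and]
  exact ⟨And.right, fun hne => ⟨not_imp_comm.1 (h t) hne, hne⟩⟩

/-- Restriction to `A` and `B` embeds vectors that agree off `A ∪ B` isometrically into
`F^{#A} × F^{#B}`. -/
lemma card_le_T_of_agree_off {S : Finset (ι → ZMod 2)} {A B : Finset ι} (hAB : Disjoint A B)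
    (g : ι → ZMod 2) {w₁ w₂ d : ℕ} (hwt : ∀ x ∈ S, wtOn A (x + g) = w₁ ∧ wtOn B (x + g) = w₂)
    (hagree : ∀ x ∈ S, ∀ y ∈ S, ∀ t ∉ A ∪ B, x t = y t)
    (hdist : ∀ x ∈ S, ∀ y ∈ S, x ≠ y → d ≤ hammingDist x y) :
    #S ≤ T w₁ #A w₂ #B d := by
  set f := fun x => restrictSum A B (x + g)
  have hf : ∀ x ∈ S, ∀ y ∈ S, hammingDist (f x) (f y) = hammingDist x y := fun x hx y hy => by
    rw [hammingDist_restrictSum hAB fun t ht => by simp [hagree x hx y hy t ht]]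
    exact hammingDist_add_add x y g
  have hinj : Set.InjOn f S := fun x hx y hy hxy =>
    hammingDist_eq_zero.1 ((hf x hx y hy).symm.trans (hammingDist_eq_zero.2 hxy))
  rw [← card_image_of_injOn hinj]
  refine card_le_T_of_isDCWCode ⟨fun u hu => ?_, fun u hu v hv huv => ?_⟩
  · obtain ⟨x, hx, rfl⟩ := mem_image.1 hu
    exact ⟨(card_filter_equivFin_symm A _).trans (hwt x hx).1,
      (card_filter_equivFin_symm B _).trans (hwt x hx).2⟩
  · obtain ⟨x, hx, rfl⟩ := mem_image.1 hu
    obtain ⟨y, hy, rfl⟩ := mem_image.1 hv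
    rw [hf x hx y hy]
    exact hdist x hx y hy fun h => huv (h ▸ rfl)

end Restrict

lemma card_filter_fin_eq {n : ℕ} (a m : ℕ) (h : a + m ≤ n) {p : Fin n → Prop} [DecidablePred p]
    (hp : ∀ t : Fin n, p t ↔ a ≤ t.val ∧ t.val < a + m) : #{t | p t} = m := by
  rw [← card_map Fin.valEmbedding, ← Nat.add_sub_cancel_left (n := a) (m := m),
    ← Nat.card_Ico a (a + m)]
  congr 1
  ext m
  simp only [mem_map, mem_filter, mem_univ, true_and, Fin.valEmbedding_apply, mem_Ico, hp]
  exact ⟨fun ⟨t, ht, htm⟩ => htm ▸ ht, fun hm => ⟨⟨m, by omega⟩, hm, rfl⟩⟩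

section Blocks

variable {n w : ℕ}

def firstBlock (n w : ℕ) : Finset (Fin n) := {t | t.val < w}

lemma mem_Vset_iff {i : ℕ} {u : Fin n → ZMod 2} :
    u ∈ Vset n w i ↔ wtOn (firstBlock n w) u = i ∧ wtOn (firstBlock n w)ᶜ u = i := by
  simp only [Vset, firstBlock, mem_filter, mem_univ, true_and, wtOn, filter_filter, compl_filter,
    not_lt]

lemma card_firstBlock (hwn : w ≤ n) : #(firstBlock n w) = w ∧ #(firstBlock n w)ᶜ = n - w := by
  have hs : #(firstBlock n w) = w := card_filter_fin_eq 0 w (by omega) fun t => by omega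
  rw [card_compl, Fintype.card_fin, hs]
  exact ⟨rfl, rfl⟩

lemma mMax_add_le {k l : ℕ} (hwn : 2 * w ≤ n) (hk : k ≤ w) (hl : l ≤ w) :
    mMax n w k l + 2 * (k + l - w) + 2 * (k + l - (n - w)) ≤ 2 * k + 2 * l := by
  obtain ⟨hs, hsc⟩ := card_firstBlock (n := n) (w := w) (by omega)
  suffices mMax n w k l ≤ 2 * k + 2 * l - 2 * (k + l - w) - 2 * (k + l - (n - w)) by omega
  refine Finset.sup_le fun p hp => ?_
  obtain ⟨hp₁, hp₂⟩ := mem_product.1 hp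
  have := hammingDist_add_le_of_wtOn_eq _ (mem_Vset_iff.1 hp₁).1 (mem_Vset_iff.1 hp₁).2
    (mem_Vset_iff.1 hp₂).1 (mem_Vset_iff.1 hp₂).2
  omega

lemma le_mMax_add {k l : ℕ} (hwn : 2 * w ≤ n) (hk : k ≤ w) (hl : l ≤ w) :
    2 * k + 2 * l ≤ mMax n w k l + 2 * (k + l - w) + 2 * (k + l - (n - w)) := by
  set s := firstBlock n w
  have hwt (x : Fin n → ZMod 2) :
      wtOn s x = #{t | t.val < w ∧ x t = 1} ∧ wtOn sᶜ x = #{t | ¬ t.val < w ∧ x t = 1} := by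
    simp only [s, firstBlock, wtOn, filter_filter, compl_filter, and_self]
  -- In each block `u` fills from the left and `v` from the right: they overlap minimally.
  set u : Fin n → ZMod 2 := fun t => if t.val < k ∨ (w ≤ t.val ∧ t.val < w + k) then 1 else 0
  set v : Fin n → ZMod 2 := fun t => if (w - l ≤ t.val ∧ t.val < w) ∨ n - l ≤ t.val then 1 else 0
  have hu : u ∈ Vset n w k := by
    rw [mem_Vset_iff, (hwt u).1, (hwt u).2]
    exact ⟨card_filter_fin_eq 0 k (by omega) fun t => by simp [u]; omega,
      card_filter_fin_eq w k (by omega) fun t => by simp [u]; omega⟩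
  have hv : v ∈ Vset n w l := by
    rw [mem_Vset_iff, (hwt v).1, (hwt v).2]
    exact ⟨card_filter_fin_eq (w - l) l (by omega) fun t => by simp [v]; omega,
      card_filter_fin_eq (n - l) l (by omega) fun t => by simp [v]; omega⟩
  have huv : wtOn s (u * v) = k + l - w ∧ wtOn sᶜ (u * v) = k + l - (n - w) := by
    rw [(hwt _).1, (hwt _).2]
    exact ⟨card_filter_fin_eq (w - l) (k + l - w) (by omega) fun t => by
        rw [Pi.mul_apply, mul_eq_one_iff_zmod_two]; simp [u, v]; omega,
      card_filter_fin_eq (n - l) (k + l - (n - w)) (by omega) fun t => by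
        rw [Pi.mul_apply, mul_eq_one_iff_zmod_two]; simp [u, v]; omega⟩
  have hle : hammingDist u v ≤ mMax n w k l :=
    Finset.le_sup (f := fun p : (Fin n → ZMod 2) × (Fin n → ZMod 2) => hammingDist p.1 p.2)
      (b := (u, v)) (mem_product.2 ⟨hu, hv⟩)
  have := hammingDist_add_two_mul_wtOn_mul s u v
  rw [(mem_Vset_iff.1 hu).1, (mem_Vset_iff.1 hu).2, (mem_Vset_iff.1 hv).1,
    (mem_Vset_iff.1 hv).2] at this
  omega

lemma mMax_add {k l : ℕ} (hwn : 2 * w ≤ n) (hk : k ≤ w) (hl : l ≤ w) :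
    mMax n w k l + 2 * (k + l - w) + 2 * (k + l - (n - w)) = 2 * k + 2 * l :=
  le_antisymm (mMax_add_le hwn hk hl) (le_mMax_add hwn hk hl)

end Blocks

section Arithmetic

variable {K : Type*} [Field K] [LinearOrder K] [IsStrictOrderedRing K]

lemma mul_add_mul_le_one_of_pair_bounds {x y Pi Pj Pij Pji : K} (hPi : 0 < Pi) (hPj : 0 < Pj)
    (hPij : 0 < Pij) (hx0 : 0 ≤ x) (hx : x ≤ Pi) (hy : y ≤ Pj)
    (hxy : y ≠ 0 → x ≤ Pij) (hyx : x ≠ 0 → y ≤ Pji) (h : 1 ≤ Pij / Pi + Pji / Pj) :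
    (Pj - Pji) / (Pj * Pij) * x + 1 / Pj * y ≤ 1 := by
  rw [div_add_div _ _ hPi.ne' hPj.ne', one_le_div (mul_pos hPi hPj)] at h
  have key : (Pj - Pji) * x + Pij * y ≤ Pj * Pij := by
    rcases eq_or_ne x 0 with rfl | hx'
    · nlinarith
    rcases eq_or_ne y 0 with rfl | hy'
    · rcases le_or_gt Pj Pji with h' | h' <;> nlinarith
    have := hxy hy'
    have := hyx hx'
    rcases le_or_gt Pj Pji with h' | h' <;> nlinarith
  rw [div_mul_eq_mul_div, one_div_mul_eq_div, div_add_div _ _ (mul_pos hPj hPij).ne' hPj.ne',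
    div_le_one (by positivity)]
  nlinarith

lemma div_add_div_le_one_of_pair_bounds {x y Pi Pj Pij Pji : K} (hPi : 0 < Pi) (hPj : 0 < Pj)
    (hx : x ≤ Pi) (hy : y ≤ Pj)
    (hxy : y ≠ 0 → x ≤ Pij) (hyx : x ≠ 0 → y ≤ Pji) (h : Pij / Pi + Pji / Pj ≤ 1) :
    x / Pi + y / Pj ≤ 1 := by
  rcases eq_or_ne x 0 with rfl | hx'
  · simpa using div_le_one_of_le₀ hy hPj.le
  rcases eq_or_ne y 0 with rfl | hy'
  · simpa using div_le_one_of_le₀ hx hPi.le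
  calc x / Pi + y / Pj ≤ Pij / Pi + Pji / Pj := by gcongr <;> [exact hxy hy'; exact hyx hx']
    _ ≤ 1 := h

lemma sum_sdiff_pair_eq_zero_or {H : Finset ℕ} {i j : ℕ} (hi : i ∈ H) (hj : j ∈ H) {a P : ℕ → K}
    (hP : ∀ k ∈ H, 0 < P k) (ha : ∀ k ∈ H, a k ≤ P k)
    (hzero : ∀ k ∈ H, ∀ l ∈ H, k ≠ l → ¬((k = i ∧ l = j) ∨ (k = j ∧ l = i)) →
      a k = 0 ∨ a l = 0) :
    ∑ k ∈ H \ {i, j}, a k / P k = 0 ∨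
      (a i = 0 ∧ a j = 0 ∧ ∑ k ∈ H \ {i, j}, a k / P k ≤ 1) := by
  by_cases h : ∃ k ∈ H \ {i, j}, a k ≠ 0
  · obtain ⟨k, hk, hak⟩ := h
    obtain ⟨hkH, hkij⟩ := mem_sdiff.1 hk
    simp only [mem_insert, mem_singleton, not_or] at hkij
    have hvan (l : ℕ) (hl : l ∈ H) (hlk : l ≠ k) : a l = 0 :=
      (hzero k hkH l hl (Ne.symm hlk) (by tauto)).resolve_left hak
    refine Or.inr ⟨hvan i hi (Ne.symm hkij.1), hvan j hj (Ne.symm hkij.2), ?_⟩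
    rw [sum_eq_single_of_mem k hk fun l hl hlk => by rw [hvan l (mem_sdiff.1 hl).1 hlk, zero_div]]
    exact div_le_one_of_le₀ (ha k hkH) (hP k hkH).le
  · simp only [not_exists, not_and, not_not] at h
    exact Or.inl (sum_eq_zero fun k hk => by rw [h k hk, zero_div])

lemma weighted_counts_le_one {H : Finset ℕ} {i j : ℕ} (hi : i ∈ H) (hj : j ∈ H) (hij : i ≠ j)
    {P : ℕ → K} {Pij Pji : K} (hP : ∀ k ∈ H, 0 < P k) (hPij : 0 < Pij) (hPji : 0 < Pji)
    {a : ℕ → K} (ha0 : ∀ k, 0 ≤ a k) (ha : ∀ k ∈ H, a k ≤ P k)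
    (hzero : ∀ k ∈ H, ∀ l ∈ H, k ≠ l → ¬((k = i ∧ l = j) ∨ (k = j ∧ l = i)) →
      a k = 0 ∨ a l = 0)
    (hai : a j ≠ 0 → a i ≤ Pij) (haj : a i ≠ 0 → a j ≤ Pji) :
    (1 ≤ Pij / P i + Pji / P j →
      (P j - Pji) / (P j * Pij) * a i + 1 / P j * a j + ∑ k ∈ H \ {i, j}, a k / P k ≤ 1) ∧
    (1 ≤ Pij / P i + Pji / P j →
      1 / P i * a i + (P i - Pij) / (P i * Pji) * a j + ∑ k ∈ H \ {i, j}, a k / P k ≤ 1) ∧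
    (Pij / P i + Pji / P j ≤ 1 → ∑ k ∈ H, a k / P k ≤ 1) := by
  have hsplit : ∑ k ∈ H, a k / P k = a i / P i + a j / P j + ∑ k ∈ H \ {i, j}, a k / P k := by
    rw [← sum_pair (f := fun k => a k / P k) hij, add_comm,
      sum_sdiff (insert_subset hi (singleton_subset_iff.2 hj))]
  rw [hsplit]
  rcases sum_sdiff_pair_eq_zero_or hi hj hP ha hzero with h0 | ⟨hi0, hj0, h1⟩
  · rw [h0, add_zero, add_zero, add_zero]
    refine ⟨fun h => ?_, fun h => ?_, fun h => ?_⟩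
    · exact mul_add_mul_le_one_of_pair_bounds (hP i hi) (hP j hj) hPij (ha0 i)
        (ha i hi) (ha j hj) hai haj h
    · rw [add_comm] at h ⊢
      exact mul_add_mul_le_one_of_pair_bounds (hP j hj) (hP i hi) hPji (ha0 j)
        (ha j hj) (ha i hi) haj hai h
    · exact div_add_div_le_one_of_pair_bounds (hP i hi) (hP j hj)
        (ha i hi) (ha j hj) hai haj h
  · simp only [hi0, hj0, mul_zero, zero_div, add_zero, zero_add]
    exact ⟨fun _ => h1, fun _ => h1, fun _ => h1⟩

end Arithmetic

lemma sum_div_card_le_one {α : Type*} (s : Finset α) {f : α → ℚ} (h : ∀ c ∈ s, f c ≤ 1) :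
    (∑ c ∈ s, f c) / #s ≤ 1 :=
  div_le_one_of_le₀ ((sum_le_sum h).trans (by simp)) (Nat.cast_nonneg _)

section Code

variable {n d w : ℕ} {C : Finset (Fin n → ZMod 2)} {c : Fin n → ZMod 2}

lemma wtOn_add_of_mem_Sdist (hC : IsCWCode n d w C) (hc : c ∈ C) {x : Fin n → ZMod 2} {k : ℕ}
    (hx : x ∈ Sdist C c (2 * k)) :
    wtOn (ones c) (x + c) = k ∧ wtOn (ones c)ᶜ (x + c) = k :=
  wtOn_add_eq_of_hammingDist_eq (hC.1 c hc) (hC.1 x (mem_filter.1 hx).1) (mem_filter.1 hx).2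

lemma card_ones_of_mem (hC : IsCWCode n d w C) (hc : c ∈ C) :
    #(ones c) = w ∧ #(ones c)ᶜ = n - w := by
  have hs : #(ones c) = w := hC.1 c hc
  rw [card_compl, Fintype.card_fin, hs]
  exact ⟨rfl, rfl⟩

lemma card_Sdist_le_T (hC : IsCWCode n d w C) (hc : c ∈ C) (k : ℕ) :
    #(Sdist C c (2 * k)) ≤ T k w k (n - w) d := by
  have := card_le_T_of_agree_off disjoint_compl_right c
    (fun x hx => wtOn_add_of_mem_Sdist hC hc (k := k) hx) (fun _ _ _ _ t ht => absurd (by simp) ht)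
    (fun x hx y hy => hC.2 x (mem_filter.1 hx).1 y (mem_filter.1 hy).1)
  rwa [(card_ones_of_mem hC hc).1, (card_ones_of_mem hC hc).2] at this

lemma ne_of_mem_Sdist {k l : ℕ} (hkl : k ≠ l) {x v : Fin n → ZMod 2} (hx : x ∈ Sdist C c (2 * k))
    (hv : v ∈ Sdist C c (2 * l)) : x ≠ v := by
  rintro rfl
  have := (mem_filter.1 hx).2.symm.trans (mem_filter.1 hv).2
  omega

lemma hammingDist_le_mMax_of_mem_Sdist (hC : IsCWCode n d w C) (hwn : 2 * w ≤ n) (hc : c ∈ C)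
    {k l : ℕ} (hk : k ≤ w) (hl : l ≤ w) {x v : Fin n → ZMod 2} (hx : x ∈ Sdist C c (2 * k))
    (hv : v ∈ Sdist C c (2 * l)) : hammingDist x v ≤ mMax n w k l := by
  have := hammingDist_add_le_of_wtOn_eq _ (wtOn_add_of_mem_Sdist hC hc hx).1
    (wtOn_add_of_mem_Sdist hC hc hx).2 (wtOn_add_of_mem_Sdist hC hc hv).1
    (wtOn_add_of_mem_Sdist hC hc hv).2
  rw [hammingDist_add_add, (card_ones_of_mem hC hc).1, (card_ones_of_mem hC hc).2] at this
  have := mMax_add hwn hk hl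
  omega

lemma card_Sdist_eq_zero_or_of_mMax_lt (hC : IsCWCode n d w C) (hwn : 2 * w ≤ n) (hc : c ∈ C)
    {k l : ℕ} (hk : k ≤ w) (hl : l ≤ w) (hkl : k ≠ l) (hm : mMax n w k l < d) :
    #(Sdist C c (2 * k)) = 0 ∨ #(Sdist C c (2 * l)) = 0 := by
  by_contra! h
  obtain ⟨x, hx⟩ := card_ne_zero.1 h.1
  obtain ⟨v, hv⟩ := card_ne_zero.1 h.2
  have := hC.2 x (mem_filter.1 hx).1 v (mem_filter.1 hv).1 (ne_of_mem_Sdist hkl hx hv)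
  have := hammingDist_le_mMax_of_mem_Sdist hC hwn hc hk hl hx hv
  omega

lemma wtOn_mul_of_mMax_eq (hC : IsCWCode n d w C) (hwn : 2 * w ≤ n) (hc : c ∈ C)
    {k l : ℕ} (hk : k ≤ w) (hl : l ≤ w) (hkl : k ≠ l) (hm : mMax n w k l = d)
    {x v : Fin n → ZMod 2} (hx : x ∈ Sdist C c (2 * k)) (hv : v ∈ Sdist C c (2 * l)) :
    wtOn (ones c) ((x + c) * (v + c)) = k + l - #(ones c) ∧
      wtOn (ones c)ᶜ ((x + c) * (v + c)) = k + l - #(ones c)ᶜ := by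
  have hd := hC.2 x (mem_filter.1 hx).1 v (mem_filter.1 hv).1 (ne_of_mem_Sdist hkl hx hv)
  refine wtOn_mul_eq_of_le_hammingDist _ (wtOn_add_of_mem_Sdist hC hc hx).1
    (wtOn_add_of_mem_Sdist hC hc hx).2 (wtOn_add_of_mem_Sdist hC hc hv).1
    (wtOn_add_of_mem_Sdist hC hc hv).2 ?_
  have := mMax_add hwn hk hl
  rw [hammingDist_add_add, (card_ones_of_mem hC hc).1, (card_ones_of_mem hC hc).2]
  omega

lemma card_Sdist_le_T_of_mMax_eq (hC : IsCWCode n d w C) (hwn : 2 * w ≤ n) (hc : c ∈ C)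
    {i j : ℕ} (hi : i ≤ w) (hj : j ≤ w) (hij : i ≠ j) (hm : mMax n w i j = d)
    {v : Fin n → ZMod 2} (hv : v ∈ Sdist C c (2 * j)) :
    #(Sdist C c (2 * i)) ≤ T (((j : ℤ) + i - (w : ℤ)).natAbs) (if w < j + i then j else w - j)
      (((j : ℤ) + i - ((n - w : ℕ) : ℤ)).natAbs) (if n - w < j + i then j else (n - w) - j) d := by
  obtain ⟨hs, hsc⟩ := card_ones_of_mem hC hc
  set s := ones c
  -- `β` flips the blocks in which the supports of `x + c` and `v + c` must be disjoint.
  set β : Fin n → ZMod 2 := fun t =>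
    if t ∈ s then (if w < j + i then 0 else 1) else (if n - w < j + i then 0 else 1)
  have hβs : ∀ t ∈ s, β t = if #s < j + i then 0 else 1 := fun t ht => by simp [β, ht, hs]
  have hβsc : ∀ t ∈ sᶜ, β t = if #sᶜ < j + i then 0 else 1 := fun t ht => by
    simp [β, mem_compl.1 ht, hsc]
  set A := {t ∈ s | (v + c + β) t = 1}
  set B := {t ∈ sᶜ | (v + c + β) t = 1}
  have hA : #A = if w < j + i then j else w - j := by
    have := wtOn_add_eq_ite s _ (wtOn_add_of_mem_Sdist hC hc hv).1 hβs
    rwa [hs] at this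
  have hB : #B = if n - w < j + i then j else (n - w) - j := by
    have := wtOn_add_eq_ite sᶜ _ (wtOn_add_of_mem_Sdist hC hc hv).2 hβsc
    rwa [hsc] at this
  have hfree (x : Fin n → ZMod 2) (hx : x ∈ Sdist C c (2 * i)) :=
    And.intro
      (wtOn_free_part s (wtOn_add_of_mem_Sdist hC hc hx).1 (wtOn_add_of_mem_Sdist hC hc hv).1
        (wtOn_mul_of_mMax_eq hC hwn hc hi hj hij hm hx hv).1 hβs)
      (wtOn_free_part sᶜ (wtOn_add_of_mem_Sdist hC hc hx).2 (wtOn_add_of_mem_Sdist hC hc hv).2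
        (wtOn_mul_of_mMax_eq hC hwn hc hi hj hij hm hx hv).2 hβsc)
  have hfixed (x : Fin n → ZMod 2) (hx : x ∈ Sdist C c (2 * i)) (t : Fin n) (ht : t ∉ A ∪ B) :
      (x + c + β) t = 1 := by
    simp only [A, B, mem_union, mem_filter, not_or, not_and] at ht
    by_cases hts : t ∈ s
    · exact (hfree x hx).1.2 t hts (ht.1 hts)
    · exact (hfree x hx).2.2 t (mem_compl.2 hts) (ht.2 (mem_compl.2 hts))
  have := card_le_T_of_agree_off (S := Sdist C c (2 * i))
    (disjoint_compl_right.mono (filter_subset _ s) (filter_subset _ sᶜ)) (c + β)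
    (fun x hx => by
      rw [← add_assoc, (hfree x hx).1.1, (hfree x hx).2.1, hs, hsc]
      exact ⟨rfl, rfl⟩)
    (fun x hx y hy t ht => by simpa using (hfixed x hx t ht).trans (hfixed y hy t ht).symm)
    (fun x hx y hy => hC.2 x (mem_filter.1 hx).1 y (mem_filter.1 hy).1)
  rwa [hA, hB] at this

lemma weighted_card_Sdist_le_one (hC : IsCWCode n d w C) (hwn : 2 * w ≤ n) (hc : c ∈ C)
    {H : Finset ℕ} (hH : ∀ k ∈ H, k ≤ w) {i j : ℕ} (hi : i ∈ H) (hj : j ∈ H) (hij : i ≠ j)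
    (hm : mMax n w i j = d)
    (hother : ∀ k ∈ H, ∀ l ∈ H, k ≠ l → ¬((k = i ∧ l = j) ∨ (k = j ∧ l = i)) →
      mMax n w k l < d)
    {P : ℕ → ℤ} (hP0 : ∀ k ∈ H, 0 < P k) (hP : ∀ k ∈ H, (T k w k (n - w) d : ℤ) ≤ P k)
    {Pij Pji : ℤ} (hPij0 : 0 < Pij) (hPji0 : 0 < Pji)
    (hPji : (T (((i : ℤ) + j - (w : ℤ)).natAbs) (if w < i + j then i else w - i)
      (((i : ℤ) + j - ((n - w : ℕ) : ℤ)).natAbs) (if n - w < i + j then i else (n - w) - i) d : ℤ)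
        ≤ Pji)
    (hPij : (T (((j : ℤ) + i - (w : ℤ)).natAbs) (if w < j + i then j else w - j)
      (((j : ℤ) + i - ((n - w : ℕ) : ℤ)).natAbs) (if n - w < j + i then j else (n - w) - j) d : ℤ)
        ≤ Pij)
    {a : ℕ → ℚ} (ha : ∀ k, a k = #(Sdist C c (2 * k))) :
    (1 ≤ (Pij : ℚ) / P i + Pji / P j →
      (P j - Pji) / (P j * Pij) * a i + 1 / P j * a j + ∑ k ∈ H \ {i, j}, a k / P k ≤ 1) ∧
    (1 ≤ (Pij : ℚ) / P i + Pji / P j →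
      1 / P i * a i + (P i - Pij) / (P i * Pji) * a j + ∑ k ∈ H \ {i, j}, a k / P k ≤ 1) ∧
    ((Pij : ℚ) / P i + Pji / P j ≤ 1 → ∑ k ∈ H, a k / P k ≤ 1) := by
  obtain rfl : a = fun k => (#(Sdist C c (2 * k)) : ℚ) := funext ha
  have hm' : mMax n w j i = d := by
    have := mMax_add hwn (hH i hi) (hH j hj)
    have := mMax_add hwn (hH j hj) (hH i hi)
    omega
  refine weighted_counts_le_one (P := fun k => (P k : ℚ)) (Pij := Pij) (Pji := Pji)
    (a := fun k => (#(Sdist C c (2 * k)) : ℚ)) hi hj hij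
    (fun k hk => by exact_mod_cast hP0 k hk) (by exact_mod_cast hPij0) (by exact_mod_cast hPji0)
    (fun k => Nat.cast_nonneg _)
    (fun k hk => by exact_mod_cast (Nat.cast_le.2 (card_Sdist_le_T hC hc k)).trans (hP k hk))
    (fun k hk l hl hkl hkl' => by
      exact_mod_cast card_Sdist_eq_zero_or_of_mMax_lt hC hwn hc (hH k hk) (hH l hl) hkl
        (hother k hk l hl hkl hkl'))
    (fun h => ?_) (fun h => ?_)
  · obtain ⟨v, hv⟩ := card_ne_zero.1 (by exact_mod_cast h)
    exact_mod_cast (Nat.cast_le.2 (card_Sdist_le_T_of_mMax_eq hC hwn hc (hH i hi) (hH j hj) hij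
      hm hv)).trans hPij
  · obtain ⟨v, hv⟩ := card_ne_zero.1 (by exact_mod_cast h)
    exact_mod_cast (Nat.cast_le.2 (card_Sdist_le_T_of_mMax_eq hC hwn hc (hH j hj) (hH i hi)
      hij.symm hm' hv)).trans hPji

lemma mul_distDistr (q : ℚ) (m : ℕ) :
    q * distDistr C m = (∑ c ∈ C, q * (#(Sdist C c m) : ℚ)) / #C := by
  rw [distDistr, mul_div_assoc', mul_sum]

lemma sum_distDistr_div (H : Finset ℕ) (P : ℕ → ℚ) :
    ∑ k ∈ H, distDistr C (2 * k) / P k =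
      (∑ c ∈ C, ∑ k ∈ H, (#(Sdist C c (2 * k)) : ℚ) / P k) / #C := by
  simp only [distDistr, div_right_comm _ (#C : ℚ) (P _), sum_div]
  exact sum_comm

end Code

theorem distDistr_subset_equality_case_general (n d w : ℕ) (C : Finset (Fin n → ZMod 2))
    (hcode : IsCWCode n d w C)
    (hwn : 2 * w ≤ n)
    (H1 : Finset ℕ) (hH1 : H1 ⊆ Finset.Icc (d / 2) w)
    (i j : ℕ) (hiH1 : i ∈ H1) (hjH1 : j ∈ H1) (hij : i ≠ j) (hm : mMax n w i j = d)
    (hother : ∀ k ∈ H1, ∀ l ∈ H1, k ≠ l → ¬((k = i ∧ l = j) ∨ (k = j ∧ l = i)) →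
      mMax n w k l < d)
    (P : ℕ → ℤ) (hP0 : ∀ k ∈ H1, 0 < P k)
    (hP : ∀ k ∈ H1, (T k w k (n - w) d : ℤ) ≤ P k)
    (Pij Pji : ℤ) (hPij0 : 0 < Pij) (hPji0 : 0 < Pji)
    (hPji : (T (((i : ℤ) + j - (w : ℤ)).natAbs)
        (if w < i + j then i else w - i)
        (((i : ℤ) + j - ((n - w : ℕ) : ℤ)).natAbs)
        (if n - w < i + j then i else (n - w) - i) d : ℤ) ≤ Pji)
    (hPij : (T (((j : ℤ) + i - (w : ℤ)).natAbs)
        (if w < j + i then j else w - j)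
        (((j : ℤ) + i - ((n - w : ℕ) : ℤ)).natAbs)
        (if n - w < j + i then j else (n - w) - j) d : ℤ) ≤ Pij) :
    ((1 : ℚ) ≤ (Pij : ℚ) / (P i : ℚ) + (Pji : ℚ) / (P j : ℚ) →
      (((P j : ℚ) - (Pji : ℚ)) / ((P j : ℚ) * (Pij : ℚ))) * distDistr C (2 * i) +
        (1 / (P j : ℚ)) * distDistr C (2 * j) +
        ∑ k ∈ H1 \ {i, j}, distDistr C (2 * k) / (P k : ℚ) ≤ 1) ∧
    ((1 : ℚ) ≤ (Pij : ℚ) / (P i : ℚ) + (Pji : ℚ) / (P j : ℚ) →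
      (1 / (P i : ℚ)) * distDistr C (2 * i) +
        (((P i : ℚ) - (Pij : ℚ)) / ((P i : ℚ) * (Pji : ℚ))) * distDistr C (2 * j) +
        ∑ k ∈ H1 \ {i, j}, distDistr C (2 * k) / (P k : ℚ) ≤ 1) ∧
    ((Pij : ℚ) / (P i : ℚ) + (Pji : ℚ) / (P j : ℚ) ≤ 1 →
      ∑ k ∈ H1, distDistr C (2 * k) / (P k : ℚ) ≤ 1) := by
  have hlocal (c : Fin n → ZMod 2) (hc : c ∈ C) :=
    weighted_card_Sdist_le_one hcode hwn hc (fun k hk => (mem_Icc.1 (hH1 hk)).2) hiH1 hjH1 hij hm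
      hother hP0 hP hPij0 hPji0 hPji hPij (a := fun k => _) fun _ => rfl
  refine ⟨fun h => ?_, fun h => ?_, fun h => ?_⟩
  · rw [mul_distDistr, mul_distDistr, sum_distDistr_div, ← add_div, ← add_div, ← sum_add_distrib,
      ← sum_add_distrib]
    exact sum_div_card_le_one C fun c hc => (hlocal c hc).1 h
  · rw [mul_distDistr, mul_distDistr, sum_distDistr_div, ← add_div, ← add_div, ← sum_add_distrib,
      ← sum_add_distrib]
    exact sum_div_card_le_one C fun c hc => (hlocal c hc).2.1 h
  · rw [sum_distDistr_div]
    exact sum_div_card_le_one C fun c hc => (hlocal c hc).2.2 h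

/-- For a nonempty `(n,d,w)` constant-weight code `C` (`d` even,
`d < 2w ≤ n`) with distance distribution `{A_{2i}}`, a subset `H1 ⊆ H` with
`|H1| ≥ 2` containing `i ≠ j` with `m_{i,j} = d` and `m_{k,l} < d` for all other
pairs, positive integers `P_k ≥ T(k,w,k,n-w,d)` for `k ∈ H1` and `P_{ij}, P_{ji}`
as described, the three conditional inequalities hold, where `H2 = H1 \ {i,j}`. -/
theorem distDistr_subset_equality_case (n d w : ℕ) (C : Finset (Fin n → ZMod 2))
    (hC : C.Nonempty) (hcode : IsCWCode n d w C) (hd : Even d) (hdw : d < 2 * w)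
    (hwn : 2 * w ≤ n)
    (H1 : Finset ℕ) (hH1 : H1 ⊆ Finset.Icc (d / 2) w) (hcard : 2 ≤ H1.card)
    (i j : ℕ) (hiH1 : i ∈ H1) (hjH1 : j ∈ H1) (hij : i ≠ j) (hm : mMax n w i j = d)
    (hother : ∀ k ∈ H1, ∀ l ∈ H1, k ≠ l → ¬((k = i ∧ l = j) ∨ (k = j ∧ l = i)) →
      mMax n w k l < d)
    (P : ℕ → ℤ) (hP0 : ∀ k ∈ H1, 0 < P k)
    (hP : ∀ k ∈ H1, (T k w k (n - w) d : ℤ) ≤ P k)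
    (Pij Pji : ℤ) (hPij0 : 0 < Pij) (hPji0 : 0 < Pji)
    (hPji : (T (((i : ℤ) + j - (w : ℤ)).natAbs)
        (if w < i + j then i else w - i)
        (((i : ℤ) + j - ((n - w : ℕ) : ℤ)).natAbs)
        (if n - w < i + j then i else (n - w) - i) d : ℤ) ≤ Pji)
    (hPij : (T (((j : ℤ) + i - (w : ℤ)).natAbs)
        (if w < j + i then j else w - j)
        (((j : ℤ) + i - ((n - w : ℕ) : ℤ)).natAbs)
        (if n - w < j + i then j else (n - w) - j) d : ℤ) ≤ Pij) :
    ((1 : ℚ) ≤ (Pij : ℚ) / (P i : ℚ) + (Pji : ℚ) / (P j : ℚ) →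
      (((P j : ℚ) - (Pji : ℚ)) / ((P j : ℚ) * (Pij : ℚ))) * distDistr C (2 * i) +
        (1 / (P j : ℚ)) * distDistr C (2 * j) +
        ∑ k ∈ H1 \ {i, j}, distDistr C (2 * k) / (P k : ℚ) ≤ 1) ∧
    ((1 : ℚ) ≤ (Pij : ℚ) / (P i : ℚ) + (Pji : ℚ) / (P j : ℚ) →
      (1 / (P i : ℚ)) * distDistr C (2 * i) +
        (((P i : ℚ) - (Pij : ℚ)) / ((P i : ℚ) * (Pji : ℚ))) * distDistr C (2 * j) +
        ∑ k ∈ H1 \ {i, j}, distDistr C (2 * k) / (P k : ℚ) ≤ 1) ∧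
    ((Pij : ℚ) / (P i : ℚ) + (Pji : ℚ) / (P j : ℚ) ≤ 1 →
      ∑ k ∈ H1, distDistr C (2 * k) / (P k : ℚ) ≤ 1) :=
  distDistr_subset_equality_case_general n d w C hcode hwn H1 hH1 i j hiH1 hjH1 hij hm hother P hP0
    hP Pij Pji hPij0 hPji0 hPji hPij
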